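/- Let A_Γ be a right-angled Artin group on a finite simplicial graph Γ. Then A_Γ admits a surjection onto ℤ with finitely generated kernel (sending every standard generator to 1) if and only if Γ is connected. -/

import Mathlib

/-- The right-angled Artin group of a simplicial graph. -/
def RAAG {V : Type} (G : SimpleGraph V) : Type :=
  PresentedGroup {r : FreeGroup V | ∃ u v : V, G.Adj u v ∧
    r = FreeGroup.of u * FreeGroup.of v * (FreeGroup.of u)⁻¹ * (FreeGroup.of v)⁻¹}

instance {V : Type} (G : SimpleGraph V) : Group (RAAG G) := by
  unfold RAAG; infer_instance

/-- The standard generator of a RAAG corresponding to a vertex. -/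
def RAAG.gen {V : Type} (G : SimpleGraph V) (v : V) : RAAG G :=
  PresentedGroup.of v

/-!
If `Γ` is connected, the kernel of `φ` is the subgroup generated by the elements `u v⁻¹` for the
finitely many edges `u — v`. Along a path every `x y⁻¹` lies in it, so it is normal: conjugating
`u v⁻¹` by a generator `w` gives `(w v⁻¹)(u w⁻¹)` because `u` and `v` commute. Hence every element
of `A_Γ` is `h tⁿ` with `h` in this subgroup and `t` a fixed generator, and `h tⁿ` lies in the
kernel only if `n = 0`.

If `a` and `b` lie in different components, send the generators of the component of `a` to `t`
and all others to `e₀ t` in `ℤ ≀ ℤ = ℤ^(ℤ) ⋊ ℤ`. The right coordinate is `φ`, so on the kernel of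
`φ` the left coordinate is a homomorphism to `ℤ^(ℤ)`; it sends `aⁿ (b a⁻¹) a⁻ⁿ` to `eₙ`, hence is
onto a free abelian group of infinite rank, which is not finitely generated.
-/

open Subgroup Multiplicative

namespace RAAG

variable {V : Type} {G : SimpleGraph V}

theorem commute_gen ⦃u v : V⦄ (h : G.Adj u v) : Commute (gen G u) (gen G v) := by
  rw [← commutatorElement_eq_one_iff_commute, commutatorElement_def]
  exact PresentedGroup.one_of_mem
    (x := FreeGroup.of u * FreeGroup.of v * (FreeGroup.of u)⁻¹ * (FreeGroup.of v)⁻¹) ⟨u, v, h, rfl⟩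

theorem closure_range_gen : closure (Set.range (gen G)) = ⊤ :=
  PresentedGroup.closure_range_of _

variable {M : Type*} [Group M]

def lift (f : V → M) (hf : ∀ ⦃u v⦄, G.Adj u v → Commute (f u) (f v)) : RAAG G →* M :=
  PresentedGroup.toGroup (f := f) <| by
    rintro _ ⟨u, v, h, rfl⟩
    simpa [commutatorElement_def] using commutatorElement_eq_one_iff_commute.mpr (hf h)

@[simp]
theorem lift_gen (f : V → M) (hf : ∀ ⦃u v⦄, G.Adj u v → Commute (f u) (f v)) (v : V) :
    lift f hf (gen G v) = f v :=
  PresentedGroup.toGroup.of _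

theorem hom_ext {φ ψ : RAAG G →* M} (h : ∀ v, φ (gen G v) = ψ (gen G v)) : φ = ψ :=
  MonoidHom.eq_of_eqOn_dense closure_range_gen <| by rintro _ ⟨v, rfl⟩; exact h v

end RAAG

theorem Subgroup.conj_mem_closure {G : Type*} [Group G] {s : Set G} {g : G}
    (hs : ∀ x ∈ s, g * x * g⁻¹ ∈ closure s) {y : G} (hy : y ∈ closure s) :
    g * y * g⁻¹ ∈ closure s := by
  induction hy using closure_induction with
  | mem x hx => exact hs x hx
  | one => simp
  | mul x y _ _ hx hy => simpa [mul_assoc] using mul_mem hx hy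
  | inv x _ hx => simpa [mul_assoc] using inv_mem hx

theorem Subgroup.mem_normalizer_closure {G : Type*} [Group G] {s : Set G} {g : G}
    (h₁ : ∀ x ∈ s, g * x * g⁻¹ ∈ closure s) (h₂ : ∀ x ∈ s, g⁻¹ * x * g ∈ closure s) :
    g ∈ normalizer (closure s : Set G) := fun y =>
  ⟨conj_mem_closure h₁, fun hy => by
    simpa [mul_assoc] using conj_mem_closure (g := g⁻¹) (by simpa using h₂) hy⟩

namespace SimpleGraph

variable {V M : Type*} [Group M] (G : SimpleGraph V) (f : V → M)

def edgeQuotientSubgroup : Subgroup M :=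
  closure {x | ∃ u v, G.Adj u v ∧ x = f u * (f v)⁻¹}

variable {G f}

theorem Reachable.mul_inv_mem {K : Subgroup M} (hK : ∀ ⦃u v⦄, G.Adj u v → f u * (f v)⁻¹ ∈ K)
    {u v : V} (h : G.Reachable u v) : f u * (f v)⁻¹ ∈ K := by
  obtain ⟨p⟩ := h
  induction p with
  | nil => simp
  | cons hadj _ ih => simpa [mul_assoc] using K.mul_mem (hK hadj) ih

theorem Adj.mul_inv_mem_edgeQuotientSubgroup {u v : V} (h : G.Adj u v) :
    f u * (f v)⁻¹ ∈ G.edgeQuotientSubgroup f :=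
  subset_closure ⟨u, v, h, rfl⟩

theorem Preconnected.mul_inv_mem_edgeQuotientSubgroup (hG : G.Preconnected) (u v : V) :
    f u * (f v)⁻¹ ∈ G.edgeQuotientSubgroup f :=
  (hG u v).mul_inv_mem fun _ _ h => h.mul_inv_mem_edgeQuotientSubgroup

theorem Preconnected.inv_mul_mem_edgeQuotientSubgroup
    (hf : ∀ ⦃u v⦄, G.Adj u v → Commute (f u) (f v)) (hG : G.Preconnected) (u v : V) :
    (f u)⁻¹ * f v ∈ G.edgeQuotientSubgroup f := by
  simpa using (hG u v).mul_inv_mem (f := fun v => (f v)⁻¹) fun u v h => by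
    simpa [(hf h).inv_left.eq] using h.symm.mul_inv_mem_edgeQuotientSubgroup (f := f)

theorem Preconnected.edgeQuotientSubgroup_normal (hf : ∀ ⦃u v⦄, G.Adj u v → Commute (f u) (f v))
    (hgen : closure (Set.range f) = ⊤) (hG : G.Preconnected) :
    (G.edgeQuotientSubgroup f).Normal := by
  refine normalizer_eq_top_iff.mp (eq_top_iff.mpr ?_)
  rw [← hgen, closure_le]
  rintro _ ⟨c, rfl⟩
  unfold edgeQuotientSubgroup
  apply mem_normalizer_closure
  · rintro _ ⟨a, b, hab, rfl⟩
    have : f c * (f a * (f b)⁻¹) * (f c)⁻¹ = f c * (f b)⁻¹ * (f a * (f c)⁻¹) := by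
      rw [(hf hab).inv_right.eq]; group
    rw [this]
    exact mul_mem (hG.mul_inv_mem_edgeQuotientSubgroup c b)
      (hG.mul_inv_mem_edgeQuotientSubgroup a c)
  · rintro _ ⟨a, b, -, rfl⟩
    have : (f c)⁻¹ * (f a * (f b)⁻¹) * f c = (f c)⁻¹ * f a * ((f b)⁻¹ * f c) := by group
    rw [this]
    exact mul_mem (hG.inv_mul_mem_edgeQuotientSubgroup hf c a)
      (hG.inv_mul_mem_edgeQuotientSubgroup hf b c)

theorem Connected.ker_eq_edgeQuotientSubgroup (hf : ∀ ⦃u v⦄, G.Adj u v → Commute (f u) (f v))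
    (hgen : closure (Set.range f) = ⊤) (hG : G.Connected) (φ : M →* Multiplicative ℤ)
    (hφ : ∀ v, φ (f v) = ofAdd 1) : φ.ker = G.edgeQuotientSubgroup f := by
  have := hG.preconnected.edgeQuotientSubgroup_normal hf hgen
  obtain ⟨t⟩ := hG.nonempty
  have hle : G.edgeQuotientSubgroup f ≤ φ.ker := by
    rw [edgeQuotientSubgroup, closure_le]
    rintro _ ⟨u, v, -, rfl⟩
    simp [hφ]
  have hsup : G.edgeQuotientSubgroup f ⊔ zpowers (f t) = ⊤ := by
    rw [eq_top_iff, ← hgen, closure_le]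
    rintro _ ⟨v, rfl⟩
    simpa using mul_mem_sup (hG.preconnected.mul_inv_mem_edgeQuotientSubgroup (f := f) v t)
      (mem_zpowers (f t))
  refine le_antisymm (fun x hx => ?_) hle
  obtain ⟨h, hh, _, hn, rfl⟩ := mem_sup_of_normal_left.mp (hsup ▸ mem_top x)
  obtain ⟨n, rfl⟩ := mem_zpowers_iff.mp hn
  have hn0 : n = 0 := by simpa [MonoidHom.mem_ker.mp (hle hh), hφ] using hx
  simpa [hn0] using hh

theorem edgeQuotientSubgroup_fg [Finite V] : (G.edgeQuotientSubgroup f).FG :=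
  (Subgroup.fg_iff _).mpr ⟨_, rfl, (Set.finite_range fun p : V × V => f p.1 * (f p.2)⁻¹).subset
    (by rintro _ ⟨u, v, -, rfl⟩; exact ⟨(u, v), rfl⟩)⟩

end SimpleGraph

theorem Multiplicative.closure_range_ofAdd_single (α : Type*) :
    closure (Set.range fun a : α => ofAdd (Finsupp.single a (1 : ℤ))) = ⊤ := by
  refine eq_top_iff.mpr fun x _ => ?_
  rw [← ofAdd_toAdd x]
  induction x.toAdd using Finsupp.induction_linear with
  | zero => exact one_mem _
  | add f g hf hg => simpa using mul_mem hf hg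
  | single a k =>
    rw [← Finsupp.smul_single_one, ofAdd_zsmul]
    exact zpow_mem (subset_closure (Set.mem_range_self a)) k

theorem Multiplicative.not_fg_finsupp (α : Type*) [Infinite α] :
    ¬ Group.FG (Multiplicative (α →₀ ℤ)) := by
  rw [← AddGroup.fg_iff_mul_fg, ← Module.Finite.iff_addGroup_fg]
  exact Module.not_finite_of_infinite_basis Finsupp.basisSingleOne

noncomputable def shiftAction : Multiplicative ℤ →* MulAut (Multiplicative (ℤ →₀ ℤ)) where
  toFun n := AddEquiv.toMultiplicative (Finsupp.domCongr (Equiv.addRight n.toAdd))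
  map_one' := by ext; simp [Equiv.Perm.one_def]
  map_mul' _ _ := by ext; simp [Equiv.Perm.mul_def, add_comm, add_left_comm, add_assoc]

@[simp]
theorem shiftAction_single (n m k : ℤ) :
    shiftAction (ofAdd n) (ofAdd (Finsupp.single m k)) = ofAdd (Finsupp.single (m + n) k) := by
  simp [shiftAction]

def SemidirectProduct.leftHomOfKer {K N H : Type*} [Group K] [Group N] [Group H]
    {ψ : H →* MulAut N} (Ψ : K →* N ⋊[ψ] H) : (rightHom.comp Ψ).ker →* N where
  toFun x := (Ψ x).left
  map_one' := by simp
  map_mul' x y := by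
    have hx : (Ψ x).right = 1 := x.2
    simp [hx]

namespace RAAG

variable {V : Type} (G : SimpleGraph V)

open SemidirectProduct

open Classical in
noncomputable def lampHom (a : V) :
    RAAG G →* Multiplicative (ℤ →₀ ℤ) ⋊[shiftAction] Multiplicative ℤ :=
  lift (fun v => inl (if G.Reachable a v then 1 else ofAdd (Finsupp.single 0 1)) * inr (ofAdd 1))
    fun u v h => by
      rw [if_congr ⟨fun hu => hu.trans h.reachable, fun hv => hv.trans h.symm.reachable⟩ rfl rfl]
      exact Commute.refl _

variable {G}

theorem not_fg_ker_of_not_reachable {a b : V} (hab : ¬ G.Reachable a b)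
    (φ : RAAG G →* Multiplicative ℤ) (hφ : ∀ v, φ (gen G v) = ofAdd 1) : ¬ φ.ker.FG := by
  have hright : rightHom.comp (lampHom G a) = φ := hom_ext fun v => by simp [lampHom, hφ]
  have hsurj : Function.Surjective (leftHomOfKer (lampHom G a)) := by
    rw [← MonoidHom.range_eq_top, eq_top_iff, ← Multiplicative.closure_range_ofAdd_single,
      closure_le]
    rintro _ ⟨n, rfl⟩
    have hker : gen G a ^ n * (gen G b * (gen G a)⁻¹) * (gen G a ^ n)⁻¹ ∈ φ.ker :=
      φ.normal_ker.conj_mem _ (by simp [hφ]) _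
    refine ⟨⟨_, hright ▸ hker⟩, ?_⟩
    have ha : lampHom G a (gen G a) = inr (ofAdd 1) := by simp [lampHom]
    have hb : lampHom G a (gen G b * (gen G a)⁻¹) = inl (ofAdd (Finsupp.single 0 1)) := by
      simp [lampHom, hab]
    change (lampHom G a _).left = _
    rw [map_mul, map_mul, map_inv, map_zpow, ha, hb, ← map_zpow, ← map_inv, ← inl_aut,
      ← ofAdd_zsmul, shiftAction_single]
    simp
  rw [← hright, ← Group.fg_iff_subgroup_fg]
  exact fun _ => Multiplicative.not_fg_finsupp ℤ (Group.fg_of_surjective hsurj)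

end RAAG

theorem raag_fibres_iff_connected {V : Type} [Fintype V] [Nonempty V]
    (G : SimpleGraph V) (φ : RAAG G →* Multiplicative ℤ)
    (hφ : ∀ v : V, φ (RAAG.gen G v) = Multiplicative.ofAdd 1) :
    (Function.Surjective φ ∧ (MonoidHom.ker φ).FG) ↔ G.Connected := by
  refine ⟨fun ⟨_, hfg⟩ => ?_, fun hG => ⟨?_, ?_⟩⟩
  · refine ⟨fun a b => ?_⟩
    by_contra hab
    exact RAAG.not_fg_ker_of_not_reachable hab φ hφ hfg
  · exact fun y => ⟨RAAG.gen G (Classical.arbitrary V) ^ y.toAdd, by simp [hφ, ← ofAdd_zsmul]⟩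
  · rw [hG.ker_eq_edgeQuotientSubgroup RAAG.commute_gen RAAG.closure_range_gen φ hφ]
    exact SimpleGraph.edgeQuotientSubgroup_fg
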